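/- Let $f \in \mathbb{C}[[x,y]]$ with $\mathrm{ord}(f) = m \geq 1$ and $g \in \mathbb{C}[[x,y]]$. Then there exist $a, b \in \mathbb{C}[[x,y]]$ such that $f + \varepsilon g \in \langle x + \varepsilon a, y + \varepsilon b \rangle^m$ in $\mathbb{C}[[x,y]][\varepsilon]/(\varepsilon^2)$ if and only if $g \in \langle \partial f/\partial x, \partial f/\partial y \rangle + \langle x, y \rangle^m$. -/

import Mathlib

set_option synthInstance.maxHeartbeats 1000000
set_option maxHeartbeats 2000000

open MvPowerSeries TrivSqZeroExt DualNumber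

noncomputable section

abbrev R2 := MvPowerSeries (Fin 2) ℂ

def Mxy : Ideal R2 := Ideal.span {MvPowerSeries.X 0, MvPowerSeries.X 1}

/-- Formal partial derivative of a power series in two variables. -/
def pd (i : Fin 2) (f : R2) : R2 :=
  fun d => (d i + 1 : ℂ) * MvPowerSeries.coeff (R := ℂ) (d + Finsupp.single i 1) f

/-- The element `x + ε a` of the dual numbers over `ℂ[[x,y]]`. -/
def Xa (a : R2) : DualNumber R2 := inl (MvPowerSeries.X 0) + eps * inl a

/-- The element `y + ε b` of the dual numbers over `ℂ[[x,y]]`. -/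
def Yb (b : R2) : DualNumber R2 := inl (MvPowerSeries.X 1) + eps * inl b

/-- The `n`-th term of the expansion of `f (x + ε a, y + ε b)`. -/
def termD (a b f : R2) (n : Fin 2 →₀ ℕ) : DualNumber R2 :=
  inl (MvPowerSeries.C (σ := Fin 2) (R := ℂ) (MvPowerSeries.coeff (R := ℂ) n f)) *
    (Xa a ^ (n 0) * Yb b ^ (n 1))

/-- Substitution `f (x + ε a, y + ε b)`, defined coefficientwise: each coefficient of
each component only receives contributions from finitely many terms of the expansion. -/
def substDual (a b f : R2) : DualNumber R2 :=
  TrivSqZeroExt.inl (R := R2) (M := R2) ((fun d => MvPowerSeries.coeff (R := ℂ) d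
        (fst (∑ n ∈ Finset.Iic (d + Finsupp.single 0 1 + Finsupp.single 1 1),
          termD a b f n)) : R2)) +
  TrivSqZeroExt.inr (R := R2) (M := R2) ((fun d => MvPowerSeries.coeff (R := ℂ) d
        (snd (∑ n ∈ Finset.Iic (d + Finsupp.single 0 1 + Finsupp.single 1 1),
          termD a b f n)) : R2))

/-! The map `h ↦ h + ε D h` attached to a derivation `D` is a ring homomorphism into the dual
numbers. For `D = a ∂ₓ + b ∂_y` it sends `x, y` to `x + εa, y + εb`, so `⟨x + εa, y + εb⟩^m` is
the extension of `⟨x, y⟩^m` along it. The extension of an ideal `J` along such a map consists of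
the `u + εv` with `u ∈ J` and `v ≡ D u (mod J)`, hence `f + εg` lies in `⟨x + εa, y + εb⟩^m`
iff `f ∈ ⟨x, y⟩^m` and `g ≡ a ∂ₓf + b ∂_y f (mod ⟨x, y⟩^m)`. -/

namespace Derivation

variable {k A : Type*} [CommSemiring k] [CommRing A] [Algebra k A]

def dualNumberHom (D : Derivation k A A) : A →+* DualNumber A where
  toFun x := inl x + eps * inl (D x)
  map_one' := by ext <;> simp
  map_mul' x y := by ext <;> simp [D.leibniz]; ring
  map_zero' := by ext <;> simp
  map_add' x y := by ext <;> simp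

@[simp] lemma fst_dualNumberHom (D : Derivation k A A) (x : A) :
    fst (D.dualNumberHom x) = x := by
  simp [dualNumberHom]

@[simp] lemma snd_dualNumberHom (D : Derivation k A A) (x : A) :
    snd (D.dualNumberHom x) = D x := by
  simp [dualNumberHom]

lemma mem_map_dualNumberHom_iff (D : Derivation k A A) (J : Ideal A) (z : DualNumber A) :
    z ∈ J.map D.dualNumberHom ↔ fst z ∈ J ∧ snd z - D (fst z) ∈ J := by
  constructor
  · intro hz
    induction hz using Submodule.span_induction with
    | mem _ hx =>
      obtain ⟨x, hx, rfl⟩ := hx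
      simpa using hx
    | zero => simp
    | add x y _ _ hx hy =>
      simp only [fst_add, snd_add, map_add]
      exact ⟨J.add_mem hx.1 hy.1, by simpa [add_sub_add_comm] using J.add_mem hx.2 hy.2⟩
    | smul c x _ hx =>
      refine ⟨by simpa using J.mul_mem_left (fst c) hx.1, ?_⟩
      have hsnd : snd (c • x) - D (fst (c • x)) =
          fst c * (snd x - D (fst x)) + fst x * (snd c - D (fst c)) := by
        simp [D.leibniz]; ring
      rw [hsnd]
      exact J.add_mem (J.mul_mem_left _ hx.2) (J.mul_mem_right _ hx.1)
  · rintro ⟨h₁, h₂⟩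
    have hz : z = D.dualNumberHom (fst z) + eps * D.dualNumberHom (snd z - D (fst z)) := by
      ext <;> simp
    rw [hz]
    exact Ideal.add_mem _ (Ideal.mem_map_of_mem _ h₁)
      (Ideal.mul_mem_left _ _ (Ideal.mem_map_of_mem _ h₂))

end Derivation

lemma pd_eq_pderiv (i : Fin 2) (f : R2) : pd i f = pderiv ℂ i f := by
  ext d
  rw [coeff_pderiv]
  exact mul_comm _ _

def directionalDerivation (a b : R2) : Derivation ℂ R2 R2 := a • pderiv ℂ 0 + b • pderiv ℂ 1

lemma directionalDerivation_apply (a b f : R2) :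
    directionalDerivation a b f = a * pd 0 f + b * pd 1 f := by
  simp [directionalDerivation, pd_eq_pderiv]

lemma dualNumberHom_X_zero (a b : R2) :
    (directionalDerivation a b).dualNumberHom (X 0) = Xa a := by
  ext <;> simp [Xa, directionalDerivation]

lemma dualNumberHom_X_one (a b : R2) :
    (directionalDerivation a b).dualNumberHom (X 1) = Yb b := by
  ext <;> simp [Yb, directionalDerivation]

lemma inl_add_eps_mul_mem_span_pow_iff (a b f g : R2) (m : ℕ) :
    inl f + eps * inl g ∈ Ideal.span {Xa a, Yb b} ^ m ↔
      f ∈ Mxy ^ m ∧ g - (a * pd 0 f + b * pd 1 f) ∈ Mxy ^ m := by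
  rw [← dualNumberHom_X_zero a b, ← dualNumberHom_X_one a b, ← Set.image_pair, ← Ideal.map_span,
    ← Mxy, ← Ideal.map_pow, Derivation.mem_map_dualNumberHom_iff, directionalDerivation_apply]
  simp

theorem equimultiple_some_section_iff_general (m : ℕ) (f g : R2)
    (hf : f ∈ Mxy ^ m) :
    (∃ a b : R2,
        (TrivSqZeroExt.inl f + eps * TrivSqZeroExt.inl g : DualNumber R2)
          ∈ Ideal.span {Xa a, Yb b} ^ m)
      ↔ g ∈ Ideal.span {pd 0 f, pd 1 f} + Mxy ^ m := by
  simp only [inl_add_eps_mul_mem_span_pow_iff, Submodule.add_eq_sup, Submodule.mem_sup]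
  constructor
  · rintro ⟨a, b, -, hg⟩
    exact ⟨_, Ideal.mem_span_pair.mpr ⟨a, b, rfl⟩, _, hg, add_sub_cancel _ _⟩
  · rintro ⟨_, hs, _, hh, rfl⟩
    obtain ⟨a, b, rfl⟩ := Ideal.mem_span_pair.mp hs
    exact ⟨a, b, hf, by simpa using hh⟩

/-- `f + ε g` is equimultiple along some section iff
`g ∈ ⟨∂f/∂x, ∂f/∂y⟩ + ⟨x,y⟩^m`. -/
theorem equimultiple_some_section_iff (m : ℕ) (hm : 1 ≤ m) (f g : R2)
    (hf : f ∈ Mxy ^ m) (hf' : f ∉ Mxy ^ (m + 1)) :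
    (∃ a b : R2,
        (TrivSqZeroExt.inl f + eps * TrivSqZeroExt.inl g : DualNumber R2)
          ∈ Ideal.span {Xa a, Yb b} ^ m)
      ↔ g ∈ Ideal.span {pd 0 f, pd 1 f} + Mxy ^ m :=
  equimultiple_some_section_iff_general m f g hf

end
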